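/- Let H be any set of homeomorphisms of the Cantor space that admits at least one H-invariant Borel probability measure. Then there exists a universal H-invariant probability measure: an H-invariant Borel probability measure μ such that, writing W for the ℚ-linear span of μ(𝔹) (values on clopen sets) in ℝ, for every H-invariant Borel probability measure ν there is a unique ℚ-linear map v: W → ℝ with ν(a) = v(μ(a)) for all clopen a. -/

import Mathlib

open MeasureTheory

/-- The Cantor space `{0,1}^ℕ`. -/
abbrev CantorSp : Type := ℕ → Bool

/-- The measure `μ` is invariant under every homeomorphism from `H`. -/
def HInvariant (H : Set (CantorSp ≃ₜ CantorSp)) (μ : Measure CantorSp) : Prop :=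
  ∀ h ∈ H, ∀ A : Set CantorSp, MeasurableSet A → μ (h '' A) = μ A

/-!
Write `Λ_ν(r)` for the value under `ν` of a formal `ℚ`-combination `r` of clopen sets; there are
countably many such `r`. For each `r` violated by some invariant probability measure (`Λ_ν(r) ≠ 0`)
pick one such `ν`, obtaining a sequence `w n`. For the mixture `μ_t = ∑ (1 - t) tⁿ w n` we have
`Λ_{μ_t}(r) = (1 - t) ∑ Λ_{w n}(r) tⁿ`, a power series with bounded coefficients, which has only
countably many zeros in `(-1, 1)` unless all its coefficients vanish. Hence for all but countably
many `t` the measure `μ_t` satisfies exactly the relations satisfied by every invariant probability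
measure, and every such `ν` factors uniquely through the `ℚ`-span of the clopen values of `μ_t`.
-/

open Set Filter Topology Finsupp TopologicalSpace

section LinearAlgebra

variable {R ι M N P : Type*} [Ring R] [AddCommGroup M] [Module R M] [AddCommGroup N]
  [Module R N] [AddCommGroup P] [Module R P]

theorem LinearMap.existsUnique_comp_eq_of_ker_le {π : M →ₗ[R] N} (hπ : Function.Surjective π)
    {g : M →ₗ[R] P} (h : ker π ≤ ker g) : ∃! v : N →ₗ[R] P, v ∘ₗ π = g := by
  let v := (ker π).liftQ g h ∘ₗ (π.quotKerEquivOfSurjective hπ).symm.toLinearMap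
  have hv : v ∘ₗ π = g := by ext x; simp [v]
  exact ⟨v, hv, fun v' hv' => (cancel_right hπ).mp (hv'.trans hv.symm)⟩

theorem Submodule.existsUnique_linearMap_span_of_ker_le {s : Set N} (a : ι → N)
    (hs : Set.range a = s) (b : ι → P)
    (hab : LinearMap.ker (linearCombination R a) ≤ LinearMap.ker (linearCombination R b)) :
    ∃! v : span R s →ₗ[R] P, ∀ i, v ⟨a i, subset_span (hs ▸ Set.mem_range_self i)⟩ = b i := by
  subst hs
  let π : (ι →₀ R) →ₗ[R] span R (Set.range a) :=
    (linearCombination R a).codRestrict _ fun c => range_linearCombination R (v := a) ▸ ⟨c, rfl⟩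
  have hπ : Function.Surjective π := by
    rintro ⟨x, hx⟩
    obtain ⟨c, rfl⟩ := (range_linearCombination R (v := a)).ge hx
    exact ⟨c, rfl⟩
  have hπ_single (i : ι) : π (single i 1) = ⟨a i, subset_span (Set.mem_range_self i)⟩ :=
    Subtype.ext (by simp [π])
  have hcomp (v : span R (Set.range a) →ₗ[R] P) :
      (∀ i, v ⟨a i, subset_span (Set.mem_range_self i)⟩ = b i) ↔
        v ∘ₗ π = linearCombination R b := by
    refine ⟨fun hv => lhom_ext' fun i => LinearMap.ext_ring ?_, fun hv i => ?_⟩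
    · simpa [hπ_single] using hv i
    · simpa [hπ_single] using LinearMap.congr_fun hv (single i 1)
  simp_rw [hcomp]
  exact LinearMap.existsUnique_comp_eq_of_ker_le hπ (by rwa [LinearMap.ker_codRestrict])

end LinearAlgebra

theorem countable_setOf_tsum_mul_pow_eq_zero {a : ℕ → ℝ} {C : ℝ} (hC : ∀ n, |a n| ≤ C)
    (ha : a ≠ 0) : {t ∈ Ioo (-1 : ℝ) 1 | ∑' n, a n * t ^ n = 0}.Countable := by
  set p := FormalMultilinearSeries.ofScalars ℝ a
  have hp : 1 ≤ p.radius := by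
    simpa using p.le_radius_of_bound C (r := 1) fun n => by simpa [p] using hC n
  have hsum (t : ℝ) : p.sum t = ∑' n, a n * t ^ n :=
    FormalMultilinearSeries.ofScalars_sum_eq a t
  have hball := p.hasFPowerSeriesOnBall (zero_lt_one.trans_le hp)
  have hU : Ioo (-1 : ℝ) 1 ⊆ Metric.eball 0 p.radius := fun t ht => by
    simpa [edist_dist, abs_lt] using hp.trans_lt' (ENNReal.ofReal_lt_one.mpr (abs_lt.mpr ht))
  have han : AnalyticOnNhd ℝ p.sum (Ioo (-1) 1) := fun t ht => hball.analyticAt_of_mem (hU ht)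
  rcases han.eqOn_zero_or_eventually_ne_zero_of_preconnected isPreconnected_Ioo with
    hzero | hnonzero
  · refine absurd ?_ ha
    have hlocal : p.sum =ᶠ[𝓝 0] 0 :=
      eventually_of_mem (Ioo_mem_nhds (by norm_num) (by norm_num)) hzero
    exact (FormalMultilinearSeries.ofScalars_series_eq_zero (E := ℝ)).mp
      (hball.hasFPowerSeriesAt.eq_zero_of_eventually hlocal)
  · have hzeros := (HereditarilyLindelofSpace.isLindelof _).countable_of_isDiscrete
      (isDiscrete_of_codiscreteWithin (s := {t | p.sum t = 0}) hnonzero)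
    simp only [hsum] at hzeros
    refine hzeros.mono ?_
    exact fun t ht => ⟨ht.2, ht.1⟩

theorem exists_mem_Ioo_forall_tsum_mul_pow_ne_zero {ι : Type*} [Countable ι] {a : ι → ℕ → ℝ}
    {C : ι → ℝ} (hC : ∀ i n, |a i n| ≤ C i) (ha : ∀ i, a i ≠ 0) :
    ∃ t ∈ Ioo (0 : ℝ) 1, ∀ i, ∑' n, a i n * t ^ n ≠ 0 := by
  have hcount : (⋃ i, {t ∈ Ioo (-1 : ℝ) 1 | ∑' n, a i n * t ^ n = 0}).Countable :=
    countable_iUnion fun i => countable_setOf_tsum_mul_pow_eq_zero (hC i) (ha i)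
  obtain ⟨t, ht, hgood⟩ :=
    (hcount.dense_compl ℝ).inter_open_nonempty _ isOpen_Ioo (nonempty_Ioo.2 zero_lt_one)
  exact ⟨t, ht, fun i h => hgood (mem_iUnion.2 ⟨i, ⟨by linarith [ht.1], ht.2⟩, h⟩)⟩

theorem hasSum_linearCombination {ι : Type*} {f : ℕ → ι → ℝ} {F : ι → ℝ}
    (hf : ∀ i, HasSum (fun n => f n i) (F i)) (r : ι →₀ ℚ) :
    HasSum (fun n => linearCombination ℚ (f n) r) (linearCombination ℚ F r) := by
  simp only [linearCombination_apply, Finsupp.sum]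
  exact hasSum_sum fun i _ => (hf i).const_smul (r i)

section Mixture

variable {α : Type*} [MeasurableSpace α]

noncomputable def geometricMixture (t : ℝ) (w : ℕ → Measure α) : Measure α :=
  Measure.sum fun n => ENNReal.ofReal ((1 - t) * t ^ n) • w n

variable {t : ℝ} {w : ℕ → Measure α} {s : Set α}

theorem geometricMixture_apply (hs : MeasurableSet s) :
    geometricMixture t w s = ∑' n, ENNReal.ofReal ((1 - t) * t ^ n) * w n s := by
  simp [geometricMixture, Measure.sum_apply _ hs]

theorem one_sub_mul_pow_nonneg (ht : t ∈ Ico (0 : ℝ) 1) (n : ℕ) : 0 ≤ (1 - t) * t ^ n :=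
  mul_nonneg (sub_nonneg.2 ht.2.le) (pow_nonneg ht.1 n)

theorem hasSum_one_sub_mul_pow (ht : t ∈ Ico (0 : ℝ) 1) :
    HasSum (fun n => (1 - t) * t ^ n) 1 := by
  simpa [mul_inv_cancel₀ (sub_ne_zero.2 ht.2.ne')] using
    (hasSum_geometric_of_lt_one ht.1 ht.2).mul_left (1 - t)

theorem isProbabilityMeasure_geometricMixture (ht : t ∈ Ico (0 : ℝ) 1)
    (hw : ∀ n, IsProbabilityMeasure (w n)) : IsProbabilityMeasure (geometricMixture t w) := by
  constructor
  rw [geometricMixture_apply MeasurableSet.univ]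
  simp only [measure_univ, mul_one]
  rw [← ENNReal.ofReal_tsum_of_nonneg (one_sub_mul_pow_nonneg ht)
    (hasSum_one_sub_mul_pow ht).summable, (hasSum_one_sub_mul_pow ht).tsum_eq, ENNReal.ofReal_one]

theorem hasSum_geometricMixture_toReal (ht : t ∈ Ico (0 : ℝ) 1)
    (hw : ∀ n, IsProbabilityMeasure (w n)) (hs : MeasurableSet s) :
    HasSum (fun n => (1 - t) * t ^ n * (w n s).toReal) (geometricMixture t w s).toReal := by
  have hfin : geometricMixture t w s ≠ ⊤ :=
    haveI := isProbabilityMeasure_geometricMixture ht hw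
    measure_ne_top _ _
  rw [geometricMixture_apply hs] at hfin ⊢
  rw [ENNReal.tsum_toReal_eq fun n =>
    ENNReal.mul_ne_top ENNReal.ofReal_ne_top (measure_ne_top _ _)]
  convert ENNReal.hasSum_toReal hfin using 2 with n
  rw [ENNReal.toReal_mul, ENNReal.toReal_ofReal (one_sub_mul_pow_nonneg ht n)]

end Mixture

theorem HInvariant.geometricMixture {H : Set (CantorSp ≃ₜ CantorSp)} {t : ℝ}
    {w : ℕ → Measure CantorSp} (hw : ∀ n, HInvariant H (w n)) :
    HInvariant H (geometricMixture t w) := by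
  intro h hh A hA
  rw [geometricMixture_apply hA,
    geometricMixture_apply (h.measurableEmbedding.measurableSet_image.2 hA)]
  simp only [hw _ h hh A hA]

section Relations

variable {α ι : Type*} [MeasurableSpace α]

noncomputable def measureCombination (ν : Measure α) (s : ι → Set α) : (ι →₀ ℚ) →ₗ[ℚ] ℝ :=
  linearCombination ℚ fun i => (ν (s i)).toReal

theorem abs_measureCombination_le (ν : Measure α) [IsProbabilityMeasure ν] (s : ι → Set α)
    (r : ι →₀ ℚ) : |measureCombination ν s r| ≤ ∑ i ∈ r.support, |(r i : ℝ)| := by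
  rw [measureCombination, linearCombination_apply, Finsupp.sum]
  refine (Finset.abs_sum_le_sum_abs _ _).trans (Finset.sum_le_sum fun i _ => ?_)
  rw [Rat.smul_def, abs_mul, abs_of_nonneg ENNReal.toReal_nonneg]
  exact mul_le_of_le_one_right (abs_nonneg _) measureReal_le_one

theorem hasSum_measureCombination_geometricMixture {t : ℝ} (ht : t ∈ Ico (0 : ℝ) 1)
    {w : ℕ → Measure α} (hw : ∀ n, IsProbabilityMeasure (w n)) {s : ι → Set α}
    (hs : ∀ i, MeasurableSet (s i)) (r : ι →₀ ℚ) :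
    HasSum (fun n => (1 - t) * t ^ n * measureCombination (w n) s r)
      (measureCombination (geometricMixture t w) s r) := by
  convert hasSum_linearCombination (fun i => hasSum_geometricMixture_toReal ht hw (hs i)) r
    using 2 with n
  · simp only [measureCombination, linearCombination_apply, Finsupp.sum, Finset.mul_sum,
      mul_smul_comm]
  · rfl

theorem exists_ker_measureCombination_geometricMixture_le [Countable ι] {w : ℕ → Measure α}
    (hw : ∀ n, IsProbabilityMeasure (w n)) {s : ι → Set α} (hs : ∀ i, MeasurableSet (s i)) :
    ∃ t ∈ Ioo (0 : ℝ) 1, ∀ n, LinearMap.ker (measureCombination (geometricMixture t w) s) ≤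
      LinearMap.ker (measureCombination (w n) s) := by
  obtain ⟨t, ht, hne⟩ := exists_mem_Ioo_forall_tsum_mul_pow_ne_zero
    (a := fun (r : {r : ι →₀ ℚ // ∃ n, measureCombination (w n) s r ≠ 0}) n =>
      measureCombination (w n) s r)
    (fun r n => abs_measureCombination_le (w n) s r.1)
    fun r h => r.2.elim fun n hn => hn (congrFun h n)
  refine ⟨t, ht, fun n r hr => ?_⟩
  by_contra hn
  have hmix :=
    (hasSum_measureCombination_geometricMixture (Ioo_subset_Ico_self ht) hw hs r).tsum_eq
  simp only [mul_right_comm _ (t ^ _), mul_assoc, tsum_mul_left] at hmix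
  exact mul_ne_zero (sub_ne_zero.2 ht.2.ne') (hne ⟨r, n, hn⟩) (hmix.trans hr)

end Relations

theorem exists_seq_forall_exists_of_countable {X ρ : Type*} [Countable ρ] [Nonempty ρ]
    {S : Set X} (hS : S.Nonempty) (P : X → ρ → Prop) :
    ∃ w : ℕ → X, (∀ n, w n ∈ S) ∧ ∀ r, (∃ x ∈ S, P x r) → ∃ n, P (w n) r := by
  have hwitness (r : ρ) : ∃ x ∈ S, (∃ x ∈ S, P x r) → P x r := by
    by_cases h : ∃ x ∈ S, P x r
    · exact h.imp fun x hx => ⟨hx.1, fun _ => hx.2⟩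
    · exact hS.imp fun x hx => ⟨hx, fun h' => absurd h' h⟩
  choose w hwS hw using hwitness
  obtain ⟨e, he⟩ := exists_surjective_nat ρ
  exact ⟨w ∘ e, fun n => hwS (e n), fun r hr => (he r).imp fun n (hn : e n = r) => hn ▸ hw r hr⟩

theorem TopologicalSpace.Clopens.range_comp_coe {X β : Type*} [TopologicalSpace X]
    (f : Set X → β) :
    range (f ∘ ((↑) : Clopens X → Set X)) = {b | ∃ A, IsClopen A ∧ b = f A} := by
  ext b
  exact ⟨fun ⟨K, hK⟩ => ⟨K, K.isClopen, hK.symm⟩, fun ⟨A, hA, hb⟩ => ⟨⟨A, hA⟩, hb.symm⟩⟩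

instance : Countable (Clopens CantorSp) :=
  Clopens.countable_iff_secondCountable.mpr inferInstance

/-- if there is an `H`-invariant Borel probability measure, then
there is a universal one: an `H`-invariant probability measure `μ` such that
every `H`-invariant probability measure `ν` factors uniquely through a
`ℚ`-linear map on the `ℚ`-span of the clopen values of `μ`. -/
theorem exists_universal_invariant_probability_measure
    (H : Set (CantorSp ≃ₜ CantorSp))
    (hex : ∃ ν : Measure CantorSp, IsProbabilityMeasure ν ∧ HInvariant H ν) :
    ∃ μ : Measure CantorSp, IsProbabilityMeasure μ ∧ HInvariant H μ ∧
      ∀ ν : Measure CantorSp, IsProbabilityMeasure ν → HInvariant H ν →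
        ∃! v : (Submodule.span ℚ
            {r : ℝ | ∃ A : Set CantorSp, IsClopen A ∧ r = (μ A).toReal}) →ₗ[ℚ] ℝ,
          ∀ (A : Set CantorSp) (hA : IsClopen A),
            v ⟨(μ A).toReal, Submodule.subset_span ⟨A, hA, rfl⟩⟩ = (ν A).toReal := by
  obtain ⟨w, hw, hviolated⟩ := exists_seq_forall_exists_of_countable hex
    fun ν (r : Clopens CantorSp →₀ ℚ) => measureCombination ν (↑) r ≠ 0
  obtain ⟨t, ht, hker⟩ := exists_ker_measureCombination_geometricMixture_le
    (fun n => (hw n).1) fun K : Clopens CantorSp => K.isClopen.isOpen.measurableSet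
  refine ⟨geometricMixture t w,
    isProbabilityMeasure_geometricMixture (Ioo_subset_Ico_self ht) fun n => (hw n).1,
    HInvariant.geometricMixture fun n => (hw n).2, fun ν hν hνH => ?_⟩
  obtain ⟨v, hv, hv_unique⟩ := Submodule.existsUnique_linearMap_span_of_ker_le _
    (Clopens.range_comp_coe fun A => (geometricMixture t w A).toReal)
    (fun K : Clopens CantorSp => (ν K).toReal) fun r hr =>
      by_contra fun h => (hviolated r ⟨ν, ⟨hν, hνH⟩, h⟩).elim fun n hn => hn (hker n hr)
  exact ⟨v, fun A hA => hv ⟨A, hA⟩, fun v' hv' => hv_unique v' fun K => hv' K K.isClopen⟩
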